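/- Let k be a field and N ≥ 1. If two finite direct sums of interval modules are isomorphic as persistence modules of length N, i.e. ⊕_{l=1}^m I[b_l, d_l] ≅ ⊕_{l'=1}^{m'} I[b'_{l'}, d'_{l'}], then m = m' and the multisets of intervals {(b_1, d_1), …, (b_m, d_m)} and {(b'_1, d'_1), …, (b'_{m'}, d'_{m'})} are equal. In particular the persistence barcode of a pointwise finite-dimensional persistence module is well-defined. -/

import Mathlib

/-- A persistence module of length `N` over a field `k`: a functor from the linear order
`{0, 1, …, N-1}` to the category of `k`-vector spaces. -/
structure PersistenceModule (k : Type) [Field k] (N : ℕ) where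
  V : Fin N → Type
  [acg : ∀ i, AddCommGroup (V i)]
  [mod : ∀ i, Module k (V i)]
  map : ∀ i j : Fin N, i ≤ j → (V i →ₗ[k] V j)
  map_id : ∀ i : Fin N, map i i le_rfl = LinearMap.id
  map_comp : ∀ (i j l : Fin N) (hij : i ≤ j) (hjl : j ≤ l),
    map j l hjl ∘ₗ map i j hij = map i l (hij.trans hjl)

attribute [instance] PersistenceModule.acg PersistenceModule.mod

/-- The dimension (1 or 0) of the interval module `I[b,d]` at index `i`. -/
def intervalDim {N : ℕ} (b d i : Fin N) : ℕ := if b ≤ i ∧ i ≤ d then 1 else 0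

/-- The interval module `I[b,d]`: one-dimensional (a copy of `k`) at indices
`b ≤ i ≤ d` and zero elsewhere, with identity structure maps on the interval and zero
structure maps elsewhere. -/
noncomputable def intervalModule (k : Type) [Field k] (N : ℕ) (b d : Fin N) :
    PersistenceModule k N where
  V i := Fin (intervalDim b d i) → k
  map i j hij :=
    if h : b ≤ i ∧ j ≤ d then
      LinearMap.funLeft k k
        (Fin.cast (by
          simp [intervalDim, h.1, h.2, h.1.trans hij, hij.trans h.2]))
    else 0
  map_id i := by
    by_cases h : b ≤ i ∧ i ≤ d
    · rw [dif_pos h]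
      refine LinearMap.ext fun x => funext fun t => ?_
      simp [LinearMap.funLeft_apply]
    · rw [dif_neg h]
      refine LinearMap.ext fun x => funext fun t => ?_
      have h0 : intervalDim b d i = 0 := by simp [intervalDim, h]
      exact absurd t.isLt (by omega)
  map_comp i j l hij hjl := by
    by_cases h3 : b ≤ i ∧ l ≤ d
    · have h1 : b ≤ i ∧ j ≤ d := ⟨h3.1, hjl.trans h3.2⟩
      have h2 : b ≤ j ∧ l ≤ d := ⟨h3.1.trans hij, h3.2⟩
      rw [dif_pos h1, dif_pos h2, dif_pos h3]
      refine LinearMap.ext fun x => funext fun t => ?_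
      simp [LinearMap.funLeft_apply]
    · rw [dif_neg h3]
      by_cases h1 : b ≤ i ∧ j ≤ d
      · have h2 : ¬(b ≤ j ∧ l ≤ d) := fun h2 => h3 ⟨h1.1, h2.2⟩
        rw [dif_neg h2, LinearMap.zero_comp]
      · rw [dif_neg h1, LinearMap.comp_zero]

/-- The (pointwise) direct sum of a finite family of persistence modules. -/
noncomputable def persDirectSum {k : Type} [Field k] {N : ℕ} (m : ℕ)
    (Ms : Fin m → PersistenceModule k N) : PersistenceModule k N where
  V i := ∀ l : Fin m, (Ms l).V i
  map i j hij := LinearMap.pi fun l => ((Ms l).map i j hij) ∘ₗ LinearMap.proj l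
  map_id i := by
    refine LinearMap.ext fun x => funext fun t => ?_
    simp [PersistenceModule.map_id]
  map_comp i j l hij hjl := by
    refine LinearMap.ext fun x => funext fun t => ?_
    simp only [LinearMap.comp_apply, LinearMap.pi_apply, LinearMap.proj_apply]
    rw [← LinearMap.comp_apply, (Ms t).map_comp]

/-- An isomorphism of persistence modules: a family of linear equivalences commuting
with the structure maps. -/
structure PersistenceModule.Iso {k : Type} [Field k] {N : ℕ}
    (M₁ M₂ : PersistenceModule k N) where
  equiv : ∀ i : Fin N, M₁.V i ≃ₗ[k] M₂.V i
  comm : ∀ (i j : Fin N) (hij : i ≤ j) (x : M₁.V i),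
    equiv j (M₁.map i j hij x) = M₂.map i j hij (equiv i x)


open Module

noncomputable def subPiEquiv {k ι : Type} [Field k] [Fintype ι] {V : ι → Type}
    [∀ i, AddCommGroup (V i)] [∀ i, Module k (V i)] (p : ∀ i, Submodule k (V i)) :
    (Submodule.pi Set.univ p) ≃ₗ[k] (∀ i, p i) where
  toFun x := fun i => ⟨x.1 i, Submodule.mem_pi.mp x.2 i (Set.mem_univ i)⟩
  map_add' x y := rfl
  map_smul' c x := rfl
  invFun y := ⟨fun i => y i, Submodule.mem_pi.mpr fun i _ => (y i).2⟩
  left_inv x := rfl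
  right_inv y := rfl

lemma finrank_subPi {k ι : Type} [Field k] [Fintype ι] {V : ι → Type}
    [∀ i, AddCommGroup (V i)] [∀ i, Module k (V i)] [∀ i, FiniteDimensional k (V i)]
    (p : ∀ i, Submodule k (V i)) :
    finrank k (Submodule.pi Set.univ p) = ∑ i, finrank k (p i) := by
  rw [(subPiEquiv p).finrank_eq, Module.finrank_pi_fintype]

lemma range_pi_proj {k ι : Type} [Field k] [Fintype ι] {V W : ι → Type}
    [∀ i, AddCommGroup (V i)] [∀ i, Module k (V i)]
    [∀ i, AddCommGroup (W i)] [∀ i, Module k (W i)]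
    (f : ∀ i, V i →ₗ[k] W i) :
    LinearMap.range (LinearMap.pi fun i => f i ∘ₗ LinearMap.proj i)
      = Submodule.pi Set.univ (fun i => LinearMap.range (f i)) := by
  ext y
  simp only [LinearMap.mem_range, Submodule.mem_pi, Set.mem_univ, forall_true_left]
  constructor
  · rintro ⟨x, rfl⟩ i
    exact ⟨x i, rfl⟩
  · intro h
    choose x hx using h
    exact ⟨x, funext fun i => by simp [LinearMap.pi_apply, hx i]⟩

lemma iso_rank {k : Type} [Field k] {N : ℕ} {M₁ M₂ : PersistenceModule k N}
    (e : M₁.Iso M₂) (i j : Fin N) (h : i ≤ j) :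
    finrank k (LinearMap.range (M₁.map i j h)) = finrank k (LinearMap.range (M₂.map i j h)) := by
  have hr : LinearMap.range (M₂.map i j h)
      = Submodule.map (e.equiv j : M₁.V j →ₗ[k] M₂.V j) (LinearMap.range (M₁.map i j h)) := by
    ext y
    simp only [Submodule.mem_map, LinearMap.mem_range]
    constructor
    · rintro ⟨x, rfl⟩
      exact ⟨M₁.map i j h ((e.equiv i).symm x), ⟨_, rfl⟩, (e.comm i j h _).trans (by simp)⟩
    · rintro ⟨z, ⟨x, rfl⟩, rfl⟩
      exact ⟨e.equiv i x, (e.comm i j h x).symm⟩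
  rw [hr, LinearEquiv.finrank_map_eq]

lemma rank_intervalSum {k : Type} [Field k] {N : ℕ} (m : ℕ) (b d : Fin m → Fin N)
    (i j : Fin N) (h : i ≤ j) :
    finrank k (LinearMap.range
        ((persDirectSum m fun l => intervalModule k N (b l) (d l)).map i j h))
      = (Finset.univ.filter fun l => b l ≤ i ∧ j ≤ d l).card := by
  have : (persDirectSum m fun l => intervalModule k N (b l) (d l)).map i j h
      = LinearMap.pi fun l => ((intervalModule k N (b l) (d l)).map i j h) ∘ₗ LinearMap.proj l := rfl
  rw [this]
  erw [range_pi_proj]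
  haveI : ∀ l : Fin m, FiniteDimensional k ((intervalModule k N (b l) (d l)).V j) :=
    fun l => inferInstanceAs (FiniteDimensional k (Fin _ → k))
  have hfr := finrank_subPi (fun l => LinearMap.range ((intervalModule k N (b l) (d l)).map i j h))
  refine hfr.trans ?_
  rw [Finset.card_filter]
  refine Finset.sum_congr rfl fun l _ => ?_
  by_cases hc : b l ≤ i ∧ j ≤ d l
  · rw [if_pos hc]
    have hmap : (intervalModule k N (b l) (d l)).map i j h
        = LinearMap.funLeft k k (Fin.cast (by
            simp [intervalDim, hc.1, hc.2, hc.1.trans h, h.trans hc.2])) := by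
      simp only [intervalModule]
      rw [dif_pos hc]
    rw [hmap]
    have hs : Function.Surjective (LinearMap.funLeft k k
        (Fin.cast (show intervalDim (b l) (d l) j = intervalDim (b l) (d l) i by
          simp [intervalDim, hc.1, hc.2, hc.1.trans h, h.trans hc.2]))) :=
      LinearMap.funLeft_surjective_of_injective k k _ (Fin.cast_injective _)
    erw [LinearMap.range_eq_top.mpr hs, finrank_top]
    show finrank k (Fin (intervalDim (b l) (d l) j) → k) = 1
    rw [Module.finrank_fin_fun]
    simp [intervalDim, hc.1.trans h, hc.2]
  · rw [if_neg hc]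
    have hmap : (intervalModule k N (b l) (d l)).map i j h = 0 := by
      simp only [intervalModule]
      rw [dif_neg hc]
      rfl
    rw [hmap, LinearMap.range_zero, finrank_bot]

/-- **Uniqueness of interval decompositions.** If two finite direct sums of interval
modules are isomorphic as persistence modules of length `N`, then they have the same
number of summands and the multisets of intervals coincide; in particular the
persistence barcode of a pointwise finite-dimensional persistence module is
well-defined. -/
theorem persistence_barcode_unique
    (k : Type) [Field k] (N : ℕ) (hN : 1 ≤ N)
    (m m' : ℕ) (b d : Fin m → Fin N) (b' d' : Fin m' → Fin N)
    (hbd : ∀ l, b l ≤ d l) (hbd' : ∀ l, b' l ≤ d' l)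
    (hiso : Nonempty
      ((persDirectSum m fun l => intervalModule k N (b l) (d l)).Iso
        (persDirectSum m' fun l => intervalModule k N (b' l) (d' l)))) :
    m = m' ∧
    (List.ofFn (fun l => (b l, d l)) : Multiset (Fin N × Fin N))
      = (List.ofFn (fun l => (b' l, d' l)) : Multiset (Fin N × Fin N)) := by
  classical
  obtain ⟨e⟩ := hiso
  have hF : ∀ i j : Fin N, i ≤ j →
      (Finset.univ.filter fun l => b l ≤ i ∧ j ≤ d l).card
      = (Finset.univ.filter fun l => b' l ≤ i ∧ j ≤ d' l).card := by
    intro i j h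
    exact (rank_intervalSum (k := k) m b d i j h).symm.trans
      ((iso_rank e i j h).trans (rank_intervalSum m' b' d' i j h))
  set f : Fin m → Fin N × Fin N := fun l => (b l, d l) with hf
  set f' : Fin m' → Fin N × Fin N := fun l => (b' l, d' l) with hf'
  set cnt : Fin N × Fin N → ℕ := fun p => (Finset.univ.filter fun l => f l = p).card with hcnt
  set cnt' : Fin N × Fin N → ℕ := fun p => (Finset.univ.filter fun l => f' l = p).card with hcnt'
  have key : ∀ p : Fin N × Fin N, cnt p = cnt' p := by
    have H : ∀ n : ℕ, ∀ p : Fin N × Fin N, p.1.val + (N - 1 - p.2.val) = n →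
        cnt p = cnt' p := by
      intro n
      induction n using Nat.strong_induction_on with
      | _ n IH =>
        rintro ⟨i, j⟩ hn
        by_cases hij : i ≤ j
        · set t := Finset.univ.filter (fun p : Fin N × Fin N => p.1 ≤ i ∧ j ≤ p.2) with ht
          have hmem : (i, j) ∈ t := by simp [ht]
          have hdec : ∀ (M : ℕ) (g : Fin M → Fin N × Fin N),
              (Finset.univ.filter fun l => (g l).1 ≤ i ∧ j ≤ (g l).2).card
              = ∑ p ∈ t, (Finset.univ.filter fun l => g l = p).card := by
            intro M g
            rw [show (Finset.univ.filter fun l => (g l).1 ≤ i ∧ j ≤ (g l).2)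
                = Finset.univ.filter (fun l => g l ∈ t) from by
                  ext l; simp [ht]]
            rw [Finset.card_eq_sum_card_fiberwise (t := t) (f := g) (s := Finset.univ.filter (fun l => g l ∈ t))
              (fun l hl => (Finset.mem_filter.mp hl).2)]
            refine Finset.sum_congr rfl fun p hp => ?_
            congr 1
            ext l
            simp only [Finset.mem_filter, Finset.mem_univ, true_and]
            constructor
            · rintro ⟨_, h2⟩; exact h2
            · rintro rfl; exact ⟨hp, rfl⟩
          have h1 := hdec m f
          have h2 := hdec m' f'
          have hFij := hF i j hij
          have e1 : cnt (i, j) + ∑ p ∈ t.erase (i, j), cnt p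
              = cnt' (i, j) + ∑ p ∈ t.erase (i, j), cnt' p := by
            rw [Finset.add_sum_erase _ cnt hmem, Finset.add_sum_erase _ cnt' hmem]
            rw [hcnt, hcnt', ← h1, ← h2]
            exact hFij
          have hsum : ∑ p ∈ t.erase (i, j), cnt p = ∑ p ∈ t.erase (i, j), cnt' p := by
            refine Finset.sum_congr rfl fun p hp => ?_
            obtain ⟨hne, hpt⟩ := Finset.mem_erase.mp hp
            simp only [ht, Finset.mem_filter, Finset.mem_univ, true_and] at hpt
            refine IH (p.1.val + (N - 1 - p.2.val)) ?_ p rfl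
            have hi : p.1.val ≤ i.val := hpt.1
            have hj : j.val ≤ p.2.val := hpt.2
            have hne' : p.1.val ≠ i.val ∨ p.2.val ≠ j.val := by
              by_contra hcc
              push_neg at hcc
              exact hne (Prod.ext (Fin.val_injective hcc.1) (Fin.val_injective hcc.2))
            have hp2 : p.2.val < N := p.2.isLt
            have hjN : j.val < N := j.isLt
            simp only at hn
            omega
          omega
        · have z1 : cnt (i, j) = 0 := by
            rw [hcnt]
            simp only [Finset.card_eq_zero, Finset.filter_eq_empty_iff]
            rintro l -
            intro hl
            have h1 : b l = i := congrArg Prod.fst hl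
            have h2 : d l = j := congrArg Prod.snd hl
            exact hij (h1 ▸ h2 ▸ hbd l)
          have z2 : cnt' (i, j) = 0 := by
            rw [hcnt']
            simp only [Finset.card_eq_zero, Finset.filter_eq_empty_iff]
            rintro l -
            intro hl
            have h1 : b' l = i := congrArg Prod.fst hl
            have h2 : d' l = j := congrArg Prod.snd hl
            exact hij (h1 ▸ h2 ▸ hbd' l)
          rw [z1, z2]
    exact fun p => H _ p rfl
  have hcount : ∀ (M : ℕ) (g : Fin M → Fin N × Fin N) (a : Fin N × Fin N),
      Multiset.count a (↑(List.ofFn g) : Multiset (Fin N × Fin N))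
      = (Finset.univ.filter fun l => g l = a).card := by
    intro M g a
    rw [← Fin.univ_val_map, Multiset.count_map]
    have hfc : Multiset.filter (fun x => a = g x) Finset.univ.val
        = Multiset.filter (fun l => g l = a) Finset.univ.val :=
      Multiset.filter_congr fun x _ => eq_comm
    rw [hfc]
    rfl
  have hms : (List.ofFn f : Multiset (Fin N × Fin N)) = ↑(List.ofFn f') := by
    ext a
    rw [hcount m f a, hcount m' f' a]
    exact key a
  refine ⟨?_, hms⟩
  have hcard := congrArg Multiset.card hms
  simpa using hcard
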